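/- arXiv:1904.02958 — 2 statements merged into one kernel-verified Lean document; each statement's English description precedes it below -/
import Mathlib

section
/- For all α ≥ 0 and c > 0, the Logitron loss L_{α,c} is 1-Lipschitz: |L_{α,c}(z₁) - L_{α,c}(z₂)| ≤ |z₁ - z₂| for all z₁, z₂ ∈ ℝ. -/
/-!
Each smooth branch (the Logitron branch for `α ≠ 1`, the logistic loss for `α = 1`) has
derivative `-(E / (c + E)) ^ α` with `E = exp_{α,c}(-z) ≥ 0`, so the mean value theorem makes it
1-Lipschitz, as is the Perceptron branch; the triangle inequality through the edge of `dom ℓ`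
glues the branches. For `α < 1` both branches vanish at the edge. For `α > 1` the smooth branch
lives on the open side only, and the gap between it and the Perceptron value at the edge is
`(c + E) ^ (1 - α) / (α - 1) ∈ [0, E ^ (1 - α) / (α - 1)]`, the right end being the distance
to the edge.
-/

open Set
open scoped NNReal

theorem LipschitzOnWith.congr {α β : Type*} [PseudoEMetricSpace α] [PseudoEMetricSpace β]
    {K : ℝ≥0} {f g : α → β} {s : Set α} (hf : LipschitzOnWith K f s) (h : EqOn f g s) :
    LipschitzOnWith K g s := fun x hx y hy => by
  rw [← h hx, ← h hy]
  exact hf hx hy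

theorem LipschitzOnWith.insert {α β : Type*} [PseudoMetricSpace α] [PseudoMetricSpace β]
    {K : ℝ≥0} {f : α → β} {s : Set α} {a : α} (hf : LipschitzOnWith K f s)
    (ha : ∀ y ∈ s, dist (f a) (f y) ≤ K * dist a y) : LipschitzOnWith K f (insert a s) := by
  refine LipschitzOnWith.of_dist_le_mul ?_
  rintro x (rfl | hx) y (rfl | hy)
  · simp
  · exact ha y hy
  · rw [dist_comm, dist_comm x]
    exact ha x hx
  · exact hf.dist_le_mul x hx y hy

theorem LipschitzWith.of_lipschitzOnWith_Iic_Ici {E : Type*} [PseudoMetricSpace E] {f : ℝ → E}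
    {K : ℝ≥0} {a : ℝ} (h₁ : LipschitzOnWith K f (Iic a))
    (h₂ : LipschitzOnWith K f (Ici a)) :
    LipschitzWith K f := by
  refine LipschitzWith.of_dist_le_mul fun x y => ?_
  wlog hxy : x ≤ y generalizing x y
  · rw [dist_comm, dist_comm x]
    exact this y x (le_of_not_ge hxy)
  rcases le_total y a with hya | hay
  · exact h₁.dist_le_mul x (hxy.trans hya) y hya
  rcases le_total a x with hax | hxa
  · exact h₂.dist_le_mul x hax y hay
  calc dist (f x) (f y) ≤ dist (f x) (f a) + dist (f a) (f y) := dist_triangle _ _ _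
    _ ≤ K * dist x a + K * dist a y :=
      add_le_add (h₁.dist_le_mul x hxa a self_mem_Iic) (h₂.dist_le_mul a self_mem_Ici y hay)
    _ = K * dist x y := by
      rw [← mul_add, Real.dist_eq, Real.dist_eq, Real.dist_eq, abs_of_nonpos (sub_nonpos.2 hxa),
        abs_of_nonpos (sub_nonpos.2 hay), abs_of_nonpos (sub_nonpos.2 hxy)]
      ring

theorem lipschitzWith_max_zero_neg : LipschitzWith 1 fun z : ℝ => max 0 (-z) := by
  simpa using LipschitzWith.id.neg.const_max (0 : ℝ)

theorem nnnorm_neg_rpow_div_add_le_one {a b r : ℝ} (ha : 0 ≤ a) (hb : 0 ≤ b) (hr : 0 ≤ r) :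
    ‖-(a / (b + a)) ^ r‖₊ ≤ 1 := by
  have hab : 0 ≤ b + a := add_nonneg hb ha
  rw [← NNReal.coe_le_coe, coe_nnnorm, Real.norm_eq_abs, abs_neg,
    abs_of_nonneg (Real.rpow_nonneg (div_nonneg ha hab) r)]
  exact Real.rpow_le_one (div_nonneg ha hab) (div_le_one_of_le₀ (le_add_of_nonneg_left hb) hab) hr

theorem lipschitzWith_log_one_add_exp_neg :
    LipschitzWith 1 fun z : ℝ => Real.log (1 + Real.exp (-z)) := by
  refine lipschitzOnWith_univ.1 <| convex_univ.lipschitzOnWith_of_nnnorm_hasDerivWithin_le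
    (f' := fun z => -(Real.exp (-z) / (1 + Real.exp (-z)))) (fun z _ => ?_) fun z _ => ?_
  · have := (((hasDerivAt_neg z).exp).const_add 1).log (by positivity)
    exact (this.congr_deriv (by ring)).hasDerivWithinAt
  · simpa using nnnorm_neg_rpow_div_add_le_one (Real.exp_pos (-z)).le zero_le_one zero_le_one

namespace Logitron

noncomputable def base (α c v : ℝ) : ℝ := c ^ (1 - α) + (1 - α) * v

noncomputable def exp (α c v : ℝ) : ℝ := base α c v ^ (1 / (1 - α))

noncomputable def smoothLoss (α c z : ℝ) : ℝ :=
  ((c + exp α c (-z)) ^ (1 - α) - c ^ (1 - α)) / (1 - α)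

/-- `dom ℓ_{α,c}` is `Iic (domainEdge α c)` for `α < 1` and `Ioi (domainEdge α c)` for
`α > 1`; `smoothLoss` takes junk values outside it. -/
noncomputable def domainEdge (α c : ℝ) : ℝ := -(c ^ (1 - α) / (α - 1))

noncomputable def loss (α c z : ℝ) : ℝ :=
  if α = 1 then Real.log (1 + Real.exp (-z))
  else if α < 1 then (if z ≤ domainEdge α c then smoothLoss α c z else max 0 (-z))
  else (if domainEdge α c < z then smoothLoss α c z else max 0 (-z))

variable {α c v z : ℝ}

theorem base_neg_eq (hα : α ≠ 1) : base α c (-z) = (α - 1) * (z - domainEdge α c) := by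
  unfold base domainEdge
  field_simp
  ring

theorem domainEdge_pos (hα : α < 1) (hc : 0 < c) : 0 < domainEdge α c :=
  neg_pos.2 (div_neg_of_pos_of_neg (Real.rpow_pos_of_pos hc _) (by linarith))

theorem domainEdge_neg (hα : 1 < α) (hc : 0 < c) : domainEdge α c < 0 :=
  neg_lt_zero.2 (div_pos (Real.rpow_pos_of_pos hc _) (by linarith))

theorem base_neg_nonneg_of_lt_one (hα : α < 1) (hz : z ≤ domainEdge α c) :
    0 ≤ base α c (-z) := by
  rw [base_neg_eq hα.ne]
  exact mul_nonneg_of_nonpos_of_nonpos (by linarith) (sub_nonpos.2 hz)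

theorem base_neg_pos_of_one_lt (hα : 1 < α) (hz : domainEdge α c < z) : 0 < base α c (-z) := by
  rw [base_neg_eq hα.ne']
  exact mul_pos (sub_pos.2 hα) (sub_pos.2 hz)

theorem loss_one : loss 1 c = fun z => Real.log (1 + Real.exp (-z)) :=
  funext fun _ => if_pos rfl

theorem exp_nonneg (hu : 0 ≤ base α c v) : 0 ≤ exp α c v := Real.rpow_nonneg hu _

theorem hasDerivAt_exp_neg (hα : α ≠ 1) (hu : 0 ≤ base α c (-z))
    (hu' : base α c (-z) ≠ 0 ∨ 1 ≤ 1 / (1 - α)) :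
    HasDerivAt (fun z => exp α c (-z)) (-exp α c (-z) ^ α) z := by
  have hbase : HasDerivAt (fun z => base α c (-z)) (-(1 - α)) z := by
    simpa [base] using ((hasDerivAt_neg z).const_mul (1 - α)).const_add (c ^ (1 - α))
  refine (hbase.rpow_const hu').congr_deriv ?_
  rw [show 1 / (1 - α) - 1 = 1 / (1 - α) * α by field_simp; ring, Real.rpow_mul hu]
  field_simp
  rfl

theorem hasDerivAt_smoothLoss (hα : α ≠ 1) (hc : 0 < c) (hu : 0 ≤ base α c (-z))
    (hu' : base α c (-z) ≠ 0 ∨ 1 ≤ 1 / (1 - α)) :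
    HasDerivAt (smoothLoss α c) (-(exp α c (-z) / (c + exp α c (-z))) ^ α) z := by
  have hE := exp_nonneg hu
  have hcE : 0 < c + exp α c (-z) := by positivity
  have := (((hasDerivAt_exp_neg hα hu hu').const_add c).rpow_const (p := 1 - α)
    (Or.inl hcE.ne')).sub_const (c ^ (1 - α)) |>.div_const (1 - α)
  refine this.congr_deriv ?_
  rw [Real.div_rpow hE hcE.le, sub_sub_cancel_left, Real.rpow_neg hcE.le]
  field_simp

theorem lipschitzOnWith_smoothLoss (hα : 0 ≤ α) (hα1 : α ≠ 1) (hc : 0 < c) {s : Set ℝ}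
    (hs : Convex ℝ s) (hu : ∀ z ∈ s, 0 ≤ base α c (-z))
    (hu' : ∀ z ∈ s, base α c (-z) ≠ 0 ∨ 1 ≤ 1 / (1 - α)) :
    LipschitzOnWith 1 (smoothLoss α c) s :=
  hs.lipschitzOnWith_of_nnnorm_hasDerivWithin_le
    (fun z hz => (hasDerivAt_smoothLoss hα1 hc (hu z hz) (hu' z hz)).hasDerivWithinAt)
    fun z hz => nnnorm_neg_rpow_div_add_le_one (exp_nonneg (hu z hz)) hc.le hα

theorem exp_rpow_one_sub (hα : α ≠ 1) (hu : 0 ≤ base α c v) :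
    exp α c v ^ (1 - α) = base α c v := by
  have h1α : 1 - α ≠ 0 := sub_ne_zero.2 (Ne.symm hα)
  rw [exp, ← Real.rpow_mul hu, one_div_mul_cancel h1α, Real.rpow_one]

theorem smoothLoss_domainEdge (hα : α ≠ 1) : smoothLoss α c (domainEdge α c) = 0 := by
  have h1α : 1 - α ≠ 0 := sub_ne_zero.2 (Ne.symm hα)
  rw [smoothLoss, exp, base_neg_eq hα, sub_self, mul_zero,
    Real.zero_rpow (one_div_ne_zero h1α), add_zero, sub_self, zero_div]

theorem neg_domainEdge_sub_smoothLoss (hα : α ≠ 1) :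
    -domainEdge α c - smoothLoss α c z = (c + exp α c (-z)) ^ (1 - α) / (α - 1) := by
  rw [domainEdge, smoothLoss]
  field_simp
  ring

theorem dist_neg_domainEdge_smoothLoss_le (hα : 1 < α) (hc : 0 < c) (hz : domainEdge α c < z) :
    dist (-domainEdge α c) (smoothLoss α c z) ≤ dist (domainEdge α c) z := by
  have hu := base_neg_pos_of_one_lt hα hz
  have hE : 0 < exp α c (-z) := Real.rpow_pos_of_pos hu _
  have hpow : (c + exp α c (-z)) ^ (1 - α) ≤ (α - 1) * (z - domainEdge α c) := by
    rw [← base_neg_eq hα.ne', ← exp_rpow_one_sub hα.ne' hu.le]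
    exact Real.rpow_le_rpow_of_nonpos hE (le_add_of_nonneg_left hc.le) (by linarith)
  rw [Real.dist_eq, Real.dist_eq, neg_domainEdge_sub_smoothLoss hα.ne',
    abs_of_nonneg (by positivity), abs_sub_comm, abs_of_pos (sub_pos.2 hz),
    div_le_iff₀ (sub_pos.2 hα)]
  linarith

theorem lipschitzWith_loss_of_lt_one (hα : 0 ≤ α) (hα1 : α < 1) (hc : 0 < c) :
    LipschitzWith 1 (loss α c) := by
  have hSmooth : LipschitzOnWith 1 (smoothLoss α c) (Iic (domainEdge α c)) :=
    lipschitzOnWith_smoothLoss hα hα1.ne hc (convex_Iic _)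
      (fun _ hz => base_neg_nonneg_of_lt_one hα1 hz)
      fun _ _ => Or.inr (by rw [le_div_iff₀ (by linarith)]; linarith)
  refine .of_lipschitzOnWith_Iic_Ici (a := domainEdge α c)
    (hSmooth.congr fun z hz => by simp [loss, hα1.ne, hα1, mem_Iic.1 hz])
    (lipschitzWith_max_zero_neg.lipschitzOnWith.congr fun z hz => ?_)
  rcases (mem_Ici.1 hz).eq_or_lt with rfl | hz
  · simp [loss, hα1.ne, hα1, smoothLoss_domainEdge hα1.ne, (domainEdge_pos hα1 hc).le]
  · simp [loss, hα1.ne, hα1, not_le.2 hz]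

theorem lipschitzWith_loss_of_one_lt (hα : 1 < α) (hc : 0 < c) : LipschitzWith 1 (loss α c) := by
  have hSmooth : LipschitzOnWith 1 (smoothLoss α c) (Ioi (domainEdge α c)) :=
    lipschitzOnWith_smoothLoss (by linarith) hα.ne' hc (convex_Ioi _)
      (fun _ hz => (base_neg_pos_of_one_lt hα hz).le)
      fun _ hz => Or.inl (base_neg_pos_of_one_lt hα hz).ne'
  have hIoi : EqOn (smoothLoss α c) (loss α c) (Ioi (domainEdge α c)) := fun z hz => by
    simp [loss, hα.ne', not_lt.2 hα.le, mem_Ioi.1 hz]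
  have hEdge : loss α c (domainEdge α c) = -domainEdge α c := by
    simp [loss, hα.ne', not_lt.2 hα.le, (domainEdge_neg hα hc).le]
  refine .of_lipschitzOnWith_Iic_Ici (a := domainEdge α c)
    (lipschitzWith_max_zero_neg.lipschitzOnWith.congr fun z hz => ?_) ?_
  · simp [loss, hα.ne', not_lt.2 hα.le, not_lt.2 (mem_Iic.1 hz)]
  rw [← Ioi_insert]
  refine (hSmooth.congr hIoi).insert fun z hz => ?_
  rw [hEdge, ← hIoi hz, NNReal.coe_one, one_mul]
  exact dist_neg_domainEdge_smoothLoss_le hα hc hz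

theorem lipschitzWith_loss (hα : 0 ≤ α) (hc : 0 < c) : LipschitzWith 1 (loss α c) := by
  rcases lt_trichotomy α 1 with hα1 | rfl | hα1
  · exact lipschitzWith_loss_of_lt_one hα hα1 hc
  · exact loss_one ▸ lipschitzWith_log_one_add_exp_neg
  · exact lipschitzWith_loss_of_one_lt hα1 hc

end Logitron

/-- For all `α ≥ 0` and `c > 0`, the Logitron loss is 1-Lipschitz. -/
theorem logitron_lipschitz (α c : ℝ) (hα : 0 ≤ α) (hc : 0 < c) :
    let cα : ℝ := c ^ (1 - α) / (α - 1)
    let eexp : ℝ → ℝ := fun v => (c ^ (1 - α) + (1 - α) * v) ^ (1 / (1 - α))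
    let ℓ : ℝ → ℝ := fun z => ((c + eexp (-z)) ^ (1 - α) - c ^ (1 - α)) / (1 - α)
    let L : ℝ → ℝ := fun z =>
      if α = 1 then Real.log (1 + Real.exp (-z))
      else if α < 1 then (if z ≤ -cα then ℓ z else max 0 (-z))
      else (if -cα < z then ℓ z else max 0 (-z))
    ∀ z₁ z₂ : ℝ, |L z₁ - L z₂| ≤ |z₁ - z₂| := by
  intro cα eexp ℓ L z₁ z₂
  show |Logitron.loss α c z₁ - Logitron.loss α c z₂| ≤ |z₁ - z₂|
  simpa [Real.dist_eq] using (Logitron.lipschitzWith_loss hα hc).dist_le_mul z₁ z₂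
end

section
/- Let α > 1 and c > 0 and set c_α = c^{1-α}/(α-1) > 0. Then as z → (-c_α)⁺, the extended logistic loss ℓ_{α,c}(z) = ln_{α,c}(c + exp_{α,c}(-z)) tends to c_α, i.e., lim_{z → -c_α, z > -c_α} ℓ_{α,c}(z) = c_α; consequently the Logitron loss L_{α,c} (defined as ℓ_{α,c}(z) for z > -c_α and max(0,-z) = -z for z ≤ -c_α) is continuous at z = -c_α. -/
open Filter Set Topology

/-! With `c_α = c^(1-α)/(α-1)`, the base `c^(1-α) + (1-α) v` of `exp_{α,c}` decreases to `0` as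
`v ↑ c_α` and the exponent `1/(1-α)` is negative, so `exp_{α,c}(-z) → ∞` as `z ↓ -c_α`. Since
`u^(1-α) → 0` as `u → ∞`, `ln_{α,c}(u) → c_α`, which gives the limit of `ℓ_{α,c}`. The other branch
`max 0 (-z)` of the Logitron loss is continuous with value `c_α ≥ 0` at `-c_α`, so the one-sided
limits agree. -/

theorem tendsto_const_add_mul_nhdsLT_nhdsGT_zero {k p : ℝ} (hp : p < 0) :
    Tendsto (fun v => k + p * v) (𝓝[<] (-k / p)) (𝓝[>] 0) := by
  have hroot : k + p * (-k / p) = 0 := by rw [mul_div_cancel₀ _ hp.ne, add_neg_cancel]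
  refine tendsto_nhdsWithin_iff.2 ⟨?_, ?_⟩
  · exact hroot ▸ ((continuous_const.add (continuous_const_mul p)).tendsto _).mono_left
      nhdsWithin_le_nhds
  · filter_upwards [self_mem_nhdsWithin] with v (hv : v < -k / p)
    have := mul_lt_mul_of_neg_left hv hp
    rw [mem_Ioi]
    linarith

theorem continuousAt_ite_lt {X Y : Type*} [TopologicalSpace X] [LinearOrder X]
    [TopologicalSpace Y] {f g : X → Y} {a : X} (hf : Tendsto f (𝓝[>] a) (𝓝 (g a)))
    (hg : ContinuousAt g a) : ContinuousAt (fun x => if a < x then f x else g x) a := by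
  rw [ContinuousAt, if_neg (lt_irrefl a), ← nhdsLE_sup_nhdsGT, tendsto_sup]
  constructor
  · refine (hg.mono_left nhdsWithin_le_nhds).congr' ?_
    filter_upwards [self_mem_nhdsWithin] with x (hx : x ≤ a)
    rw [if_neg hx.not_gt]
  · refine hf.congr' ?_
    filter_upwards [self_mem_nhdsWithin] with x (hx : a < x)
    rw [if_pos hx]

-- `deformedLog α c` and `deformedExp α c` are the paper's `ln_{α,c}` and `exp_{α,c}`.
noncomputable def deformedLog (α c u : ℝ) : ℝ := (u ^ (1 - α) - c ^ (1 - α)) / (1 - α)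

noncomputable def deformedExp (α c v : ℝ) : ℝ := (c ^ (1 - α) + (1 - α) * v) ^ (1 / (1 - α))

theorem tendsto_deformedExp_nhdsLT {α : ℝ} (hα : 1 < α) (c : ℝ) :
    Tendsto (deformedExp α c) (𝓝[<] (c ^ (1 - α) / (α - 1))) atTop := by
  have hp : 1 - α < 0 := by linarith
  have hroot : c ^ (1 - α) / (α - 1) = -c ^ (1 - α) / (1 - α) := by
    rw [neg_div, ← div_neg, neg_sub]
  rw [hroot]
  exact (tendsto_rpow_neg_nhdsGT_zero (one_div_neg.2 hp)).comp
    (tendsto_const_add_mul_nhdsLT_nhdsGT_zero hp)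

theorem tendsto_deformedLog_atTop {α : ℝ} (hα : 1 < α) (c : ℝ) :
    Tendsto (deformedLog α c) atTop (𝓝 (c ^ (1 - α) / (α - 1))) := by
  have hpow : Tendsto (fun u : ℝ => u ^ (1 - α)) atTop (𝓝 0) := by
    simpa only [neg_sub] using tendsto_rpow_neg_atTop (sub_pos.2 hα)
  have hlim : (0 - c ^ (1 - α)) / (1 - α) = c ^ (1 - α) / (α - 1) := by
    rw [zero_sub, neg_div, ← div_neg, neg_sub]
  exact hlim ▸ (hpow.sub_const _).div_const _

theorem tendsto_deformedLog_add_deformedExp_neg {α : ℝ} (hα : 1 < α) (c : ℝ) :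
    Tendsto (fun z => deformedLog α c (c + deformedExp α c (-z)))
      (𝓝[>] (-(c ^ (1 - α) / (α - 1)))) (𝓝 (c ^ (1 - α) / (α - 1))) :=
  (tendsto_deformedLog_atTop hα c).comp <|
    (tendsto_atTop_add_const_left _ c (tendsto_deformedExp_nhdsLT hα c)).comp
      tendsto_neg_nhdsGT_neg

/-- For `α > 1` and `c > 0` with `c_α = c^(1-α)/(α-1) > 0`, the extended
logistic loss `ℓ_{α,c}(z) = ln_{α,c}(c + exp_{α,c}(-z))` tends to `c_α` as
`z → (-c_α)⁺`; consequently the Logitron loss is continuous at `-c_α`. -/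
theorem logitron_boundary_limit (α c : ℝ) (hα : 1 < α) (hc : 0 < c) :
    let cα : ℝ := c ^ (1 - α) / (α - 1)
    let eexp : ℝ → ℝ := fun v => (c ^ (1 - α) + (1 - α) * v) ^ (1 / (1 - α))
    let ℓ : ℝ → ℝ := fun z => ((c + eexp (-z)) ^ (1 - α) - c ^ (1 - α)) / (1 - α)
    let L : ℝ → ℝ := fun z => if -cα < z then ℓ z else max 0 (-z)
    Filter.Tendsto ℓ (nhdsWithin (-cα) (Set.Ioi (-cα))) (nhds cα) ∧
      ContinuousAt L (-cα) := by
  intro cα eexp ℓ L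
  have hℓ : Tendsto ℓ (𝓝[>] (-cα)) (𝓝 cα) := tendsto_deformedLog_add_deformedExp_neg hα c
  have hcα : max 0 (-(-cα)) = cα := by
    rw [neg_neg, max_eq_right]
    exact div_nonneg (Real.rpow_nonneg hc.le _) (sub_nonneg.2 hα.le)
  refine ⟨hℓ, continuousAt_ite_lt ?_ (continuous_const.max continuous_neg).continuousAt⟩
  rwa [hcα]
end
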